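/- The infected-population stays nonnegative: if x₃' = -η x₃ + ρ x₂ (P - x₃) with η, ρ ≥ 0, x₂ continuous and nonnegative, 0 ≤ x₃(0) ≤ P, then x₃(t) ≥ 0 for all t ≥ 0. -/

import Mathlib

/-! While `x₃ < 0` both terms of `x₃'` are nonnegative, so `x₃` cannot decrease there; hence after
the last time on `[0, t]` at which `x₃ ≥ 0` it is monotone, and `x₃ t ≥ 0`. -/

open Set

theorem nonneg_of_nonneg_deriv_of_neg {y y' : ℝ → ℝ} {a b : ℝ} (hab : a ≤ b)
    (hcont : ContinuousOn y (Icc a b)) (hderiv : ∀ t ∈ Ioo a b, HasDerivAt y (y' t) t)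
    (hbarrier : ∀ t ∈ Ioo a b, y t < 0 → 0 ≤ y' t) (ha : 0 ≤ y a) : 0 ≤ y b := by
  by_contra! hb
  set S := Icc a b ∩ y ⁻¹' Ici 0
  have hS : IsCompact S :=
    isCompact_Icc.of_isClosed_subset (hcont.preimage_isClosed_of_isClosed isClosed_Icc isClosed_Ici)
      inter_subset_left
  obtain ⟨s, ⟨⟨has, hsb⟩, hys⟩, hs_greatest⟩ := hS.exists_isGreatest ⟨a, ⟨le_rfl, hab⟩, ha⟩
  have hneg : ∀ t ∈ Ioc s b, y t < 0 := fun t ⟨hst, htb⟩ => by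
    by_contra! hyt
    exact (hs_greatest ⟨⟨has.trans hst.le, htb⟩, hyt⟩).not_gt hst
  have hsb' : s < b := hsb.lt_of_ne fun h => (h ▸ hb).not_ge hys
  have hmono : MonotoneOn y (Icc s b) := by
    refine monotoneOn_of_deriv_nonneg (convex_Icc s b) (hcont.mono (Icc_subset_Icc_left has)) ?_ ?_
    all_goals
      rw [interior_Icc]
      intro t ht
      have ht' : t ∈ Ioo a b := ⟨has.trans_lt ht.1, ht.2⟩
    · exact (hderiv t ht').differentiableAt.differentiableWithinAt
    · rw [(hderiv t ht').deriv]
      exact hbarrier t ht' (hneg t ⟨ht.1, ht.2.le⟩)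
  exact (hys.trans (hmono ⟨le_rfl, hsb⟩ ⟨hsb, le_rfl⟩ hsb)).not_gt hb

theorem infected_nonneg_general
    (η ρ P : ℝ) (x₂ x₃ : ℝ → ℝ)
    (hη : 0 ≤ η) (hρ : 0 ≤ ρ)
    (hx₂ : ∀ t, 0 ≤ x₂ t)
    (h0 : 0 ≤ x₃ 0) (h0P : x₃ 0 ≤ P)
    (hder : ∀ t, 0 ≤ t → HasDerivAt x₃ (-η * x₃ t + ρ * x₂ t * (P - x₃ t)) t) :
    ∀ t, 0 ≤ t → 0 ≤ x₃ t := by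
  intro t ht
  have hP : 0 ≤ P := h0.trans h0P
  refine nonneg_of_nonneg_deriv_of_neg ht (fun s hs => (hder s hs.1).continuousAt.continuousWithinAt)
    (fun s hs => hder s hs.1.le) (fun s hs hneg => ?_) h0
  have hinflow : 0 ≤ ρ * x₂ s * (P - x₃ s) := by
    have := hx₂ s
    have : 0 ≤ P - x₃ s := by linarith
    positivity
  nlinarith

/-- The infected population stays nonnegative. -/
theorem infected_nonneg
    (η ρ P : ℝ) (x₂ x₃ : ℝ → ℝ)
    (hη : 0 ≤ η) (hρ : 0 ≤ ρ)
    (hx₂c : Continuous x₂) (hx₂ : ∀ t, 0 ≤ x₂ t)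
    (h0 : 0 ≤ x₃ 0) (h0P : x₃ 0 ≤ P)
    (hder : ∀ t, 0 ≤ t → HasDerivAt x₃ (-η * x₃ t + ρ * x₂ t * (P - x₃ t)) t) :
    ∀ t, 0 ≤ t → 0 ≤ x₃ t :=
  infected_nonneg_general η ρ P x₂ x₃ hη hρ hx₂ h0 h0P hder
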